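/- arXiv:math/0006155 — 4 statements merged into one kernel-verified Lean document; each statement's English description precedes it below -/
import Mathlib

section
/- If G is a right-orderable group and R is a ring with no zero divisors, then the group ring R[G] has no zero divisors. -/
/-- A group is right-orderable if it admits a strict total order invariant
under right multiplication. -/
def RightOrderable (G : Type*) [Group G] : Prop :=
  ∃ r : G → G → Prop, IsStrictTotalOrder G r ∧ ∀ g h k : G, r g h → r (g * k) (h * k)

theorem groupRing_noZeroDivisors (R : Type*) [Ring R] [NoZeroDivisors R]
    (G : Type*) [Group G] (hG : RightOrderable G) :
    ∀ a b : MonoidAlgebra R G, a * b = 0 → a = 0 ∨ b = 0 := by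
  obtain ⟨r, hsto, hcov⟩ := hG
  haveI := hsto
  letI := Classical.decRel r
  letI : LinearOrder G := linearOrderOfSTO r
  haveI : MulRightStrictMono G := ⟨fun k a b hab => hcov a b k hab⟩
  intro a b hab
  exact mul_eq_zero.mp hab
end

section
/- If G is a right-orderable group and R is a ring with no zero divisors, then every unit of the group ring R[G] is of the form r·g where r is a unit of R and g ∈ G. -/
/-!
A right order on `G` makes `G` a `TwoUniqueProds` monoid: whenever `1 < |A| * |B|`, two distinct
products `a * b` with `a ∈ A`, `b ∈ B` are each attained only once. Applied to the supports of
`f` and `g`, the coefficients of `f * g` at those two points are products of nonzero elements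
of `R`, so `f * g` has at least two monomials. Since `1` is a monomial, `u * u⁻¹ = 1` forces `u`
to be a monomial `single g r`, and `r` is a unit because `single g r = single 1 r * single g 1`
with `single g 1` a unit.
-/

theorem RightOrderable.twoUniqueProds {G : Type*} [Group G] (hG : RightOrderable G) :
    TwoUniqueProds G := by
  classical
  obtain ⟨r, _, hmul⟩ := hG
  let : LinearOrder G := linearOrderOfSTO r
  have : MulRightStrictMono G := ⟨fun k _ _ h ↦ hmul _ _ k h⟩
  exact TwoUniqueProds.of_covariant_left

namespace MonoidAlgebra

open Finset

variable {R : Type*} [Semiring R]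

theorem one_lt_card_support_mul [NoZeroDivisors R] {A : Type*} [Mul A] [TwoUniqueProds A]
    {f g : MonoidAlgebra R A} (h : 1 < #f.coeff.support * #g.coeff.support) :
    1 < #(f * g).coeff.support := by
  obtain ⟨p, hp, q, hq, hpq, hup, huq⟩ := TwoUniqueProds.uniqueMul_of_one_lt_card h
  have mem_support {x : A × A} (hx : x ∈ f.coeff.support ×ˢ g.coeff.support)
      (hux : UniqueMul f.coeff.support g.coeff.support x.1 x.2) :
      x.1 * x.2 ∈ (f * g).coeff.support := by
    rw [mem_product, Finsupp.mem_support_iff, Finsupp.mem_support_iff] at hx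
    rw [Finsupp.mem_support_iff, coeff_mul_mul_of_uniqueMul hux]
    exact mul_ne_zero hx.1 hx.2
  refine one_lt_card.mpr ⟨_, mem_support hp hup, _, mem_support hq huq, fun he ↦ hpq ?_⟩
  obtain ⟨h1, h2⟩ := hup (mem_product.mp hq).1 (mem_product.mp hq).2 he.symm
  exact Prod.ext h1.symm h2.symm

theorem exists_eq_single_of_isUnit [NoZeroDivisors R] {A : Type*} [Monoid A] [TwoUniqueProds A]
    {u : MonoidAlgebra R A} (hu : IsUnit u) : ∃ a r, u = single a r := by
  rcases subsingleton_or_nontrivial R with _ | _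
  · exact ⟨1, 0, Subsingleton.elim _ _⟩
  obtain ⟨v, huv⟩ := hu.exists_right_inv
  have hv : #v.coeff.support ≠ 0 := by
    intro hv
    rw [Finsupp.card_support_eq_zero, ← coeff_zero, coeff_inj] at hv
    simp [hv] at huv
  have huv_card : #u.coeff.support * #v.coeff.support ≤ 1 := by
    refine not_lt.mp fun h ↦ ?_
    simpa [huv, one_def, coeff_single] using one_lt_card_support_mul h
  obtain ⟨a, r, hu⟩ := Finsupp.card_support_le_one'.mp <|
    (Nat.le_mul_of_pos_right _ (Nat.pos_of_ne_zero hv)).trans huv_card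
  exact ⟨a, r, coeff_injective hu⟩

theorem isUnit_single_iff {G : Type*} [Group G] {g : G} {r : R} :
    IsUnit (single g r) ↔ IsUnit r := by
  have hsingle : single g r = singleOneRingHom r * of R G g := by
    simp [singleOneRingHom_apply, of_apply, single_mul_single]
  rw [hsingle, ((Group.isUnit g).map (of R G)).mul_right_iff, isUnit_map_iff]

end MonoidAlgebra

theorem groupRing_units_are_monomials (R : Type*) [Ring R] [NoZeroDivisors R]
    (G : Type*) [Group G] (hG : RightOrderable G) :
    ∀ u : (MonoidAlgebra R G)ˣ, ∃ r : Rˣ, ∃ g : G,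
      (u : MonoidAlgebra R G) = MonoidAlgebra.single g (r : R) := by
  have := hG.twoUniqueProds
  intro u
  obtain ⟨g, r, hu⟩ := MonoidAlgebra.exists_eq_single_of_isUnit u.isUnit
  obtain ⟨r, rfl⟩ := MonoidAlgebra.isUnit_single_iff.mp (hu ▸ u.isUnit)
  exact ⟨r, g, hu⟩
end

section
/- Every free group is bi-orderable. -/
/-!
Magnus embedding: sending each generator `a` to `1 + X a` defines a homomorphism from the free
group into the units of the ring `ℤ⟨⟨α⟩⟩` of noncommutative power series. It is injective: an
element written in syllable form `a₁ ^ e₁ ⋯ aₖ ^ eₖ` (adjacent letters distinct, exponents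
nonzero) has coefficient `e₁ ⋯ eₖ ≠ 0` at the word `a₁ ⋯ aₖ`. All its values have constant term
`1`, and multiplying by such a series on either side leaves the coefficients unchanged up to the
first degree in which two series differ. Hence comparing series lexicographically, along a
well-order of the words in which shorter words come first, pulls back to a bi-invariant total
order on the free group.
-/

/-- A group is bi-orderable if it admits a strict total order invariant
under both left and right multiplication. -/
def BiOrderable (G : Type*) [Group G] : Prop :=
  ∃ r : G → G → Prop, IsStrictTotalOrder G r ∧
    ∀ g h k : G, r g h → r (g * k) (h * k) ∧ r (k * g) (k * h)

open Function

universe u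

def Word (α : Type u) := List α

namespace Word

variable {α : Type u}

noncomputable def key (w : Word α) : ℕ ×ₗ Ordinal.{u} :=
  toLex (List.length w, Ordinal.typein (WellOrderingRel (α := List α)) w)

lemma key_injective : Injective (key (α := α)) := fun _ _ h =>
  Ordinal.typein_injective (WellOrderingRel (α := List α)) (congrArg (fun k => (ofLex k).2) h)

noncomputable instance : LinearOrder (Word α) := LinearOrder.lift' key key_injective

instance : WellFoundedLT (Word α) := ⟨InvImage.wf key wellFounded_lt⟩

lemma lt_of_length_lt {v w : Word α} (h : List.length v < List.length w) : v < w :=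
  Prod.Lex.lt_iff.2 (Or.inl h)

lemma length_le_of_le {v w : Word α} (h : v ≤ w) : List.length v ≤ List.length w := by
  rcases Prod.Lex.le_iff.1 h with h | ⟨h, -⟩
  exacts [h.le, h.le]

end Word

def NCPowerSeries (α : Type u) := List α → ℤ

namespace NCPowerSeries

variable {α : Type u}

instance : AddCommGroup (NCPowerSeries α) := Pi.addCommGroup

@[simp] lemma zero_apply (w : List α) : (0 : NCPowerSeries α) w = 0 := rfl
@[simp] lemma add_apply (f g : NCPowerSeries α) (w : List α) : (f + g) w = f w + g w := rfl
@[simp] lemma sub_apply (f g : NCPowerSeries α) (w : List α) : (f - g) w = f w - g w := rfl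
@[simp] lemma neg_apply (f : NCPowerSeries α) (w : List α) : (-f) w = -f w := rfl
@[simp] lemma zsmul_apply (c : ℤ) (f : NCPowerSeries α) (w : List α) : (c • f) w = c * f w := rfl

def derivative (a : α) (f : NCPowerSeries α) : NCPowerSeries α := fun w => f (a :: w)

/-- The Cauchy product `(f * g) w = ∑_{w = u v} f u * g v` (`mul_apply`), by recursion on `w`. -/
def mul (f g : NCPowerSeries α) : List α → ℤ
  | [] => f [] * g []
  | a :: w => f [] * g (a :: w) + mul (derivative a f) g w

instance : Mul (NCPowerSeries α) := ⟨fun f g => mul f g⟩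

instance : One (NCPowerSeries α) := ⟨fun w => if w = [] then 1 else 0⟩

@[simp] lemma one_nil : (1 : NCPowerSeries α) [] = 1 := rfl
@[simp] lemma one_cons (a : α) (w : List α) : (1 : NCPowerSeries α) (a :: w) = 0 := rfl

lemma mul_nil (f g : NCPowerSeries α) : (f * g) [] = f [] * g [] := rfl

lemma mul_cons (f g : NCPowerSeries α) (a : α) (w : List α) :
    (f * g) (a :: w) = f [] * g (a :: w) + (derivative a f * g) w := rfl

@[simp] lemma derivative_apply (a : α) (f : NCPowerSeries α) (w : List α) :
  derivative a f w = f (a :: w) := rfl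

lemma add_mul_apply (f f' g : NCPowerSeries α) (w : List α) :
    ((f + f') * g) w = (f * g) w + (f' * g) w := by
  induction w generalizing f f' with
  | nil => simp [mul_nil, add_mul]
  | cons a w ih =>
    simp only [mul_cons, add_apply]
    rw [show derivative a (f + f') = derivative a f + derivative a f' from rfl, ih]
    ring

lemma mul_add_apply (f g g' : NCPowerSeries α) (w : List α) :
    (f * (g + g')) w = (f * g) w + (f * g') w := by
  induction w generalizing f with
  | nil => simp [mul_nil, mul_add]
  | cons a w ih => simp only [mul_cons, add_apply, ih]; ring

lemma zsmul_mul_apply (c : ℤ) (f g : NCPowerSeries α) (w : List α) :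
    ((c • f) * g) w = c * (f * g) w := by
  induction w generalizing f with
  | nil => simp [mul_nil, mul_assoc]
  | cons a w ih =>
    simp only [mul_cons, zsmul_apply]
    rw [show derivative a (c • f) = c • derivative a f from rfl, ih]
    ring

lemma derivative_mul (a : α) (f g : NCPowerSeries α) :
    derivative a (f * g) = f [] • derivative a g + derivative a f * g := rfl

lemma zero_mul_apply (g : NCPowerSeries α) (w : List α) : (0 * g) w = 0 := by
  simpa using zsmul_mul_apply 0 0 g w

lemma mul_zero_apply (f : NCPowerSeries α) (w : List α) : (f * 0) w = 0 := by
  simpa using mul_add_apply f 0 0 w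

lemma one_mul_apply (g : NCPowerSeries α) (w : List α) : (1 * g) w = g w := by
  cases w with
  | nil => simp [mul_nil]
  | cons a w =>
    rw [mul_cons, show derivative a 1 = (0 : NCPowerSeries α) from rfl, zero_mul_apply]
    simp

lemma mul_one_apply (f : NCPowerSeries α) (w : List α) : (f * 1) w = f w := by
  induction w generalizing f with
  | nil => simp [mul_nil]
  | cons a w ih => simp [mul_cons, ih]

lemma mul_assoc_apply (f g h : NCPowerSeries α) (w : List α) :
    (f * g * h) w = (f * (g * h)) w := by
  induction w generalizing f with
  | nil => simp only [mul_nil, mul_assoc]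
  | cons a w ih =>
    rw [mul_cons, mul_cons, mul_cons, derivative_mul, add_mul_apply, zsmul_mul_apply, ih,
      mul_nil]
    ring

instance : Ring (NCPowerSeries α) where
  mul_assoc f g h := funext (mul_assoc_apply f g h)
  one_mul g := funext (one_mul_apply g)
  mul_one f := funext (mul_one_apply f)
  left_distrib f g g' := funext (mul_add_apply f g g')
  right_distrib f f' g := funext (add_mul_apply f f' g)
  zero_mul g := funext (zero_mul_apply g)
  mul_zero f := funext (mul_zero_apply f)

lemma mul_apply (f g : NCPowerSeries α) (w : List α) :
    (f * g) w = ∑ i ∈ Finset.range (w.length + 1), f (w.take i) * g (w.drop i) := by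
  induction w generalizing f with
  | nil => simp [mul_nil]
  | cons a w ih =>
    rw [mul_cons, ih, List.length_cons, Finset.sum_range_succ' _ (w.length + 1)]
    simp [add_comm]

lemma mul_apply_singleton (f g : NCPowerSeries α) (a : α) :
    (f * g) [a] = f [] * g [a] + f [a] * g [] := by
  rw [mul_cons, mul_nil]; rfl

noncomputable instance : LinearOrder (NCPowerSeries α) :=
  LinearOrder.lift' (fun f => (toLex f : Lex (Word α → ℤ))) fun _ _ h => h

lemma lt_of_lt_of_sub_apply_eq {f g f' g' : NCPowerSeries α} (h : f < g)
    (H : ∀ n, (∀ v : List α, v.length < n → (g - f) v = 0) →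
      ∀ v : List α, v.length ≤ n → (g' - f') v = (g - f) v) :
    f' < g' := by
  obtain ⟨w, hbelow, hw⟩ := h
  have H' := H (List.length w) fun v hv =>
    sub_eq_zero.2 (hbelow v (Word.lt_of_length_lt hv)).symm
  refine ⟨w, fun v hv => ?_, ?_⟩
  · have h₁ : g' v - f' v = g v - f v := H' v (Word.length_le_of_le hv.le)
    have h₂ : f v = g v := hbelow v hv
    show f' v = g' v
    linarith
  · have h₁ : g' w - f' w = g w - f w := H' w le_rfl
    have h₂ : f w < g w := hw
    show f' w < g' w
    linarith

lemma mul_apply_eq_of_forall_length_lt_left {u d : NCPowerSeries α} (hu : u [] = 1) {n : ℕ}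
    (hd : ∀ v : List α, v.length < n → d v = 0) {v : List α} (hv : v.length ≤ n) :
    (u * d) v = d v := by
  rw [mul_apply, Finset.sum_eq_single 0 (fun i hi hi0 => ?_) (by simp)]
  · simp [hu]
  rw [hd _ ?_, mul_zero]
  simp only [Finset.mem_range] at hi
  simp only [List.length_drop]
  omega

lemma mul_apply_eq_of_forall_length_lt_right {u d : NCPowerSeries α} (hu : u [] = 1) {n : ℕ}
    (hd : ∀ v : List α, v.length < n → d v = 0) {v : List α} (hv : v.length ≤ n) :
    (d * u) v = d v := by
  rw [mul_apply, Finset.sum_eq_single v.length (fun i hi hi0 => ?_) (by simp)]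
  · simp [hu]
  rw [hd _ ?_, zero_mul]
  simp only [Finset.mem_range] at hi
  simp only [List.length_take]
  omega

lemma mul_lt_mul_left_of_apply_nil {u f g : NCPowerSeries α} (hu : u [] = 1) (h : f < g) :
    u * f < u * g :=
  lt_of_lt_of_sub_apply_eq h fun _ hd _ hv => by
    rw [← mul_sub, mul_apply_eq_of_forall_length_lt_left hu hd hv]

lemma mul_lt_mul_right_of_apply_nil {u f g : NCPowerSeries α} (hu : u [] = 1) (h : f < g) :
    f * u < g * u :=
  lt_of_lt_of_sub_apply_eq h fun _ hd _ hv => by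
    rw [← sub_mul, mul_apply_eq_of_forall_length_lt_right hu hd hv]

def singleVar (a : α) : Submonoid (NCPowerSeries α) where
  carrier := {f | ∀ w, f w ≠ 0 → ∀ b ∈ w, b = a}
  one_mem' w hw := by cases w <;> simp_all
  mul_mem' {f g} hf hg w hw b hb := by
    rw [mul_apply] at hw
    obtain ⟨i, -, hi⟩ := Finset.exists_ne_zero_of_sum_ne_zero hw
    rw [← List.take_append_drop i w, List.mem_append] at hb
    exact hb.elim (hf _ (left_ne_zero_of_mul hi) b) (hg _ (right_ne_zero_of_mul hi) b)

lemma mul_apply_cons_of_isChain {a b : α} {f : NCPowerSeries α} (hf : f ∈ singleVar a)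
    (g : NCPowerSeries α) {w : List α} (hw : (b :: w).IsChain (· ≠ ·)) :
    (f * g) (b :: w) = f [] * g (b :: w) + f [b] * g w := by
  rw [mul_cons]
  congr 1
  cases w with
  | nil => rfl
  | cons c w =>
    have hbc : b ≠ c := (List.isChain_cons_cons.1 hw).1
    have : derivative c (derivative b f) = 0 := funext fun u => by
      by_contra h
      exact hbc ((hf (b :: c :: u) h b (by simp)).trans (hf (b :: c :: u) h c (by simp)).symm)
    rw [mul_cons, this, zero_mul, zero_apply, add_zero]
    rfl

lemma prod_apply_eq_zero_of_length_lt (L : List (NCPowerSeries α))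
    (hL : ∀ f ∈ L, ∃ a, f ∈ singleVar a) {w : List α} (hw : w.IsChain (· ≠ ·))
    (hlen : L.length < w.length) : L.prod w = 0 := by
  induction L generalizing w with
  | nil => cases w with
    | nil => simp at hlen
    | cons b w => rfl
  | cons f L ih =>
    obtain ⟨a, hf⟩ := hL f List.mem_cons_self
    have hL' : ∀ f ∈ L, ∃ a, f ∈ singleVar a := fun f hf => hL f (List.mem_cons_of_mem _ hf)
    cases w with
    | nil => simp at hlen
    | cons b w =>
      simp only [List.length_cons] at hlen
      rw [List.prod_cons, mul_apply_cons_of_isChain hf _ hw, ih hL' hw (by simp; omega),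
        ih hL' (w := w) hw.tail (by omega)]
      simp

lemma prod_apply_map_fst (P : List (α × NCPowerSeries α)) (hP : ∀ p ∈ P, p.2 ∈ singleVar p.1)
    (hchain : (P.map Prod.fst).IsChain (· ≠ ·)) :
    (P.map Prod.snd).prod (P.map Prod.fst) = (P.map fun p => p.2 [p.1]).prod := by
  induction P with
  | nil => rfl
  | cons p P ih =>
    have hP' : ∀ q ∈ P, q.2 ∈ singleVar q.1 := fun q hq => hP q (List.mem_cons_of_mem _ hq)
    simp only [List.map_cons, List.prod_cons] at hchain ⊢
    rw [mul_apply_cons_of_isChain (hP p List.mem_cons_self) _ hchain,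
      prod_apply_eq_zero_of_length_lt _ (fun f hf => ?_) hchain (by simp), ih hP' hchain.tail]
    · ring
    obtain ⟨q, hq, rfl⟩ := List.mem_map.1 hf
    exact ⟨q.1, hP' q hq⟩

end NCPowerSeries

namespace FreeGroup

variable {α : Type u}

def IsSyllableForm (S : List (α × ℤ)) : Prop :=
  (S.map Prod.fst).IsChain (· ≠ ·) ∧ ∀ p ∈ S, p.2 ≠ 0

def syllableProd (S : List (α × ℤ)) : FreeGroup α := (S.map fun p => of p.1 ^ p.2).prod

lemma exists_isSyllableForm_zpow_mul (a : α) (e : ℤ) {S : List (α × ℤ)}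
    (hS : IsSyllableForm S) :
    ∃ S', IsSyllableForm S' ∧ syllableProd S' = of a ^ e * syllableProd S := by
  by_cases he : e = 0
  · exact ⟨S, hS, by simp [he]⟩
  match S, hS with
  | [], _ =>
    exact ⟨[(a, e)], ⟨List.isChain_singleton _, by simpa using he⟩, by simp [syllableProd]⟩
  | (c, f) :: R, ⟨hchain, hne⟩ =>
    by_cases hc : c = a
    · subst hc
      by_cases hef : e + f = 0
      · refine ⟨R, ⟨hchain.tail, fun p hp => hne p (List.mem_cons_of_mem _ hp)⟩, ?_⟩
        simp [syllableProd, ← mul_assoc, ← zpow_add, hef]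
      · refine ⟨(c, e + f) :: R, ⟨hchain, ?_⟩, ?_⟩
        · simpa [hef] using fun p q hp => hne (p, q) (List.mem_cons_of_mem _ hp)
        · simp [syllableProd, ← mul_assoc, ← zpow_add]
    · refine ⟨(a, e) :: (c, f) :: R, ⟨List.IsChain.cons_cons (Ne.symm hc) hchain, ?_⟩, rfl⟩
      simpa [he] using hne

lemma exists_isSyllableForm (g : FreeGroup α) : ∃ S, IsSyllableForm S ∧ syllableProd S = g := by
  have hg : g ∈ Subgroup.closure (Set.range (of : α → FreeGroup α)) := by
    simp [closure_range_of]
  induction hg using Subgroup.closure_induction_left with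
  | one => exact ⟨[], ⟨List.isChain_nil, by simp⟩, rfl⟩
  | mul_left x hx y _ ih =>
    obtain ⟨a, rfl⟩ := hx
    obtain ⟨S, hS, rfl⟩ := ih
    simpa using exists_isSyllableForm_zpow_mul a 1 hS
  | inv_mul_cancel x hx y _ ih =>
    obtain ⟨a, rfl⟩ := hx
    obtain ⟨S, hS, rfl⟩ := ih
    simpa using exists_isSyllableForm_zpow_mul a (-1) hS

end FreeGroup

namespace NCPowerSeries

variable {α : Type u} [DecidableEq α]

def X (a : α) : NCPowerSeries α := fun w => if w = [a] then 1 else 0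

def invOneAddX (a : α) : NCPowerSeries α
  | [] => 1
  | b :: w => if b = a then -invOneAddX a w else 0

lemma derivative_one_add_X (a b : α) :
    derivative b (1 + X a) = if b = a then 1 else 0 := by
  funext w
  by_cases hb : b = a <;> cases w <;> simp [X, hb]

lemma one_add_X_mul_inv (a : α) : (1 + X a) * invOneAddX a = 1 := by
  funext w
  cases w with
  | nil => rfl
  | cons b w =>
    rw [mul_cons, derivative_one_add_X]
    by_cases hb : b = a <;> simp [hb, invOneAddX, one_mul_apply, zero_mul_apply, X]

lemma inv_mul_one_add_X (a : α) : invOneAddX a * (1 + X a) = 1 := by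
  funext w
  induction w with
  | nil => rfl
  | cons b w ih =>
    rw [mul_cons]
    by_cases hb : b = a
    · rw [show derivative b (invOneAddX a) = -invOneAddX a by
        funext u; simp [invOneAddX, hb]]
      rw [neg_mul, neg_apply, ih]
      cases w <;> simp [X, hb, invOneAddX]
    · rw [show derivative b (invOneAddX a) = 0 by funext u; simp [invOneAddX, hb]]
      simp [X, hb, invOneAddX]

def magnusGen (a : α) : (NCPowerSeries α)ˣ :=
  ⟨1 + X a, invOneAddX a, one_add_X_mul_inv a, inv_mul_one_add_X a⟩

lemma one_add_X_mem_singleVar (a : α) : 1 + X a ∈ singleVar a := by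
  rintro (_ | ⟨c, _ | ⟨d, w⟩⟩) hw b hb <;> simp_all [X]

lemma invOneAddX_mem_singleVar (a : α) : invOneAddX a ∈ singleVar a := by
  intro w hw b hb
  induction w with
  | nil => simp at hb
  | cons c w ih =>
    by_cases hc : c = a
    · simp only [invOneAddX, hc, if_true, ne_eq, neg_eq_zero] at hw
      exact (List.mem_cons.1 hb).elim (· ▸ hc) (ih hw)
    · simp [invOneAddX, hc] at hw

end NCPowerSeries

namespace FreeGroup

open NCPowerSeries

variable {α : Type u} [DecidableEq α]

def magnus : FreeGroup α →* (NCPowerSeries α)ˣ := lift magnusGen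

lemma magnus_apply_nil (g : FreeGroup α) : (magnus g : NCPowerSeries α) [] = 1 := by
  induction g with
  | C1 => rfl
  | of a => simp [magnus, magnusGen, X]
  | inv_of a _ => simp [magnus, magnusGen, invOneAddX]
  | mul g h hg hh => rw [_root_.map_mul, Units.val_mul, mul_nil, hg, hh, mul_one]

lemma magnus_of_zpow_apply_singleton (a : α) (e : ℤ) :
    (magnus (of a ^ e) : NCPowerSeries α) [a] = e := by
  induction e using Int.induction_on with
  | zero => rfl
  | succ n ih =>
    rw [zpow_add_one, _root_.map_mul, Units.val_mul, mul_apply_singleton, magnus_apply_nil, ih,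
      magnus_apply_nil]
    simp [magnus, magnusGen, X]
    ring
  | pred n ih =>
    rw [zpow_sub_one, _root_.map_mul, Units.val_mul, mul_apply_singleton, magnus_apply_nil, ih,
      magnus_apply_nil]
    simp [magnus, magnusGen, invOneAddX]
    ring

lemma magnus_of_zpow_mem_singleVar (a : α) (e : ℤ) :
    (magnus (of a ^ e) : NCPowerSeries α) ∈ singleVar a := by
  have hgen : magnusGen a ∈ (singleVar a).units :=
    (Submonoid.mem_units_iff _ _).2 ⟨one_add_X_mem_singleVar a, invOneAddX_mem_singleVar a⟩
  rw [map_zpow, magnus, lift_apply_of]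
  exact ((Submonoid.mem_units_iff _ _).1 (zpow_mem hgen e)).1

lemma magnus_injective : Injective (magnus (α := α)) := by
  refine (injective_iff_map_eq_one _).2 fun g hg => ?_
  by_contra hg1
  obtain ⟨S, ⟨hchain, hne⟩, rfl⟩ := exists_isSyllableForm g
  set P := S.map fun p => (p.1, (magnus (of p.1 ^ p.2) : NCPowerSeries α))
  have hfst : P.map Prod.fst = S.map Prod.fst := by simp [P, Function.comp_def]
  have hval : (magnus (syllableProd S) : NCPowerSeries α) = (P.map Prod.snd).prod := by
    change (Units.coeHom _).comp magnus _ = _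
    rw [syllableProd, map_list_prod, List.map_map, List.map_map]
    rfl
  have hP : ∀ p ∈ P, p.2 ∈ singleVar p.1 := by
    simp only [P, List.mem_map]
    rintro _ ⟨p, -, rfl⟩
    exact magnus_of_zpow_mem_singleVar p.1 p.2
  have hcoeff := prod_apply_map_fst P hP (hfst ▸ hchain)
  rw [← hval, hg, Units.val_one, hfst] at hcoeff
  have hS : S ≠ [] := by rintro rfl; exact hg1 rfl
  have hlhs : (1 : NCPowerSeries α) (S.map Prod.fst) = 0 := by
    obtain ⟨p, S', rfl⟩ := List.exists_cons_of_ne_nil hS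
    rfl
  refine List.prod_ne_zero ?_ (hlhs ▸ hcoeff).symm
  simp only [P, List.map_map, List.mem_map, Function.comp_apply, magnus_of_zpow_apply_singleton]
  rintro ⟨p, hp, h0⟩
  exact hne p hp h0

end FreeGroup

theorem freeGroup_biOrderable (α : Type*) : BiOrderable (FreeGroup α) := by
  classical
  let : LinearOrder (FreeGroup α) :=
    LinearOrder.lift' (fun g => (FreeGroup.magnus g : NCPowerSeries α))
      (Units.val_injective.comp FreeGroup.magnus_injective)
  refine ⟨(· < ·), inferInstance, fun g h k hgh => ⟨?_, ?_⟩⟩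
  · show (FreeGroup.magnus (g * k) : NCPowerSeries α) < FreeGroup.magnus (h * k)
    simpa using NCPowerSeries.mul_lt_mul_right_of_apply_nil (FreeGroup.magnus_apply_nil k) hgh
  · show (FreeGroup.magnus (k * g) : NCPowerSeries α) < FreeGroup.magnus (k * h)
    simpa using NCPowerSeries.mul_lt_mul_left_of_apply_nil (FreeGroup.magnus_apply_nil k) hgh
end

section
/- The Magnus expansion M : F → ℤ⟪X_i : i ∈ I⟫, sending generator x_i to 1 + X_i and x_i⁻¹ to 1 - X_i + X_i² - ⋯, is an injective group homomorphism from the free group F on {x_i}_{i∈I} into the group of units of the ring of formal power series in non-commuting indeterminates X_i with integer coefficients, and its image is contained in the set of power series with constant term 1. -/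
/-! Noncommutative formal power series over `ℤ` in indeterminates indexed by `I`
are modelled as coefficient functions on words (`List I`). -/

/-- Convolution (Cauchy) product of noncommutative power series. -/
def conv {I : Type*} (f g : List I → ℤ) : List I → ℤ :=
  fun w => ∑ k ∈ Finset.range (w.length + 1), f (w.take k) * g (w.drop k)

/-- The power series `1`. -/
def oneSeries {I : Type*} : List I → ℤ := fun w => match w with | [] => 1 | _ => 0

/-- The power series `1 + X_i`, the Magnus expansion of the generator `x_i`. -/
def genSeries {I : Type*} [DecidableEq I] (i : I) : List I → ℤ :=
  fun w => if w = [] ∨ w = [i] then 1 else 0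

/-- The power series `1 - X_i + X_i² - ⋯`, the Magnus expansion of `x_i⁻¹`. -/
def invGenSeries {I : Type*} [DecidableEq I] (i : I) : List I → ℤ :=
  fun w => if w = List.replicate w.length i then (-1) ^ w.length else 0

/-- The expansion of a single letter of a reduced word. -/
def letterSeries {I : Type*} [DecidableEq I] (p : I × Bool) : List I → ℤ :=
  if p.2 then genSeries p.1 else invGenSeries p.1

/-- The Magnus expansion of an element of the free group on `I`. -/
def magnus {I : Type*} [DecidableEq I] (a : FreeGroup I) : List I → ℤ :=
  ((FreeGroup.toWord a).map letterSeries).foldr conv oneSeries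


/-! A nontrivial reduced word is a product of syllables `x_{i₁}^{e₁} ⋯ x_{iₖ}^{eₖ}` with
`iⱼ ≠ iⱼ₊₁` and `eⱼ ≠ 0`. In its Magnus expansion the monomial `X_{i₁} ⋯ X_{iₖ}` can only
arise by picking the linear term `eⱼ Xᵢⱼ` of every syllable, since any other choice of the
same length takes some `Xᵢⱼ^m` with `m ≥ 2` and so produces two equal adjacent letters.
Its coefficient is therefore `e₁ ⋯ eₖ ≠ 0`, while the series `1` has no such coefficient.
Multiplicativity holds because `magnus` agrees with the homomorphism extending `xᵢ ↦ 1 + Xᵢ`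
into the units of the monoid of series. -/

section

variable {I : Type*}

lemma conv_nil (f g : List I → ℤ) : conv f g [] = f [] * g [] := by
  simp [conv]

lemma conv_cons (f g : List I → ℤ) (a : I) (w : List I) :
    conv f g (a :: w) = f [] * g (a :: w) + conv (fun u => f (a :: u)) g w := by
  rw [conv, List.length_cons, Finset.sum_range_succ', add_comm]
  simp [conv]

lemma conv_zero_left (g : List I → ℤ) : conv 0 g = 0 := by
  funext w
  simp [conv]

lemma conv_neg_left (f g : List I → ℤ) : conv (-f) g = -conv f g := by
  funext w
  simp [conv]

lemma conv_add_left (f f' g : List I → ℤ) : conv (f + f') g = conv f g + conv f' g := by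
  funext w
  simp [conv, add_mul, Finset.sum_add_distrib]

lemma conv_smul_left (c : ℤ) (f g : List I → ℤ) : conv (c • f) g = c • conv f g := by
  funext w
  simp [conv, Finset.mul_sum, mul_assoc]

lemma conv_one_left (f : List I → ℤ) : conv oneSeries f = f := by
  funext w
  cases w with
  | nil => simp [conv_nil, oneSeries]
  | cons a w =>
    have : (fun u => (oneSeries : List I → ℤ) (a :: u)) = 0 := rfl
    rw [conv_cons, this, conv_zero_left]
    simp [oneSeries]

lemma conv_one_right (f : List I → ℤ) : conv f oneSeries = f := by
  funext w
  rw [conv, Finset.sum_eq_single_of_mem w.length (by simp)]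
  · simp [oneSeries]
  · intro k hk hkw
    obtain ⟨a, t, h⟩ := List.exists_cons_of_ne_nil (l := w.drop k) (by
      simp only [Finset.mem_range] at hk
      simp only [ne_eq, List.drop_eq_nil_iff]
      omega)
    simp [h, oneSeries]

lemma conv_assoc (f g h : List I → ℤ) : conv (conv f g) h = conv f (conv g h) := by
  funext w
  induction w generalizing f with
  | nil => simp [conv_nil, mul_assoc]
  | cons a w ih =>
    have hshift : (fun u => conv f g (a :: u)) =
        f [] • (fun u => g (a :: u)) + conv (fun u => f (a :: u)) g := by
      funext u
      simp [conv_cons]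
    rw [conv_cons, conv_cons, conv_cons, conv_nil, hshift, conv_add_left, conv_smul_left]
    simp only [Pi.add_apply, Pi.smul_apply, smul_eq_mul, ih]
    ring

-- A type synonym, so that `conv` can serve as multiplication without clashing with the pointwise
-- product on functions.
def NCSeries (I : Type*) := List I → ℤ

instance : Monoid (NCSeries I) where
  mul := conv
  one := oneSeries
  mul_assoc := conv_assoc
  one_mul := conv_one_left
  mul_one := conv_one_right

def NCSeries.constCoeff : NCSeries I →* ℤ where
  toFun f := f []
  map_one' := rfl
  map_mul' := conv_nil

variable [DecidableEq I]

lemma letterSeries_nil (p : I × Bool) : letterSeries p [] = 1 := by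
  rcases p with ⟨i, _ | _⟩ <;> simp [letterSeries, genSeries, invGenSeries]

lemma letterSeries_cons_of_ne {p : I × Bool} {a : I} (ha : a ≠ p.1) (u : List I) :
    letterSeries p (a :: u) = 0 := by
  rcases p with ⟨i, _ | _⟩ <;>
    simp [letterSeries, genSeries, invGenSeries, List.replicate_succ, ha]

lemma invGenSeries_cons_self (i : I) (u : List I) :
    invGenSeries i (i :: u) = -invGenSeries i u := by
  simp only [invGenSeries, List.length_cons, List.replicate_succ, List.cons.injEq, true_and]
  split_ifs <;> simp [pow_succ]

lemma genSeries_cons_self (i : I) : (fun u => genSeries i (i :: u)) = oneSeries := by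
  funext u
  cases u <;> simp [genSeries, oneSeries]

lemma genSeries_conv_invGenSeries (i : I) : conv (genSeries i) (invGenSeries i) = oneSeries := by
  funext w
  cases w with
  | nil => simp [conv_nil, genSeries, invGenSeries, oneSeries]
  | cons a w =>
    rw [conv_cons]
    by_cases h : a = i
    · subst h
      rw [genSeries_cons_self, conv_one_left, invGenSeries_cons_self]
      simp [genSeries, oneSeries]
    · have : (fun u => genSeries i (a :: u)) = 0 := by
        funext u
        simp [genSeries, h]
      rw [this, conv_zero_left]
      simp [genSeries, invGenSeries, oneSeries, List.replicate_succ, h]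

lemma invGenSeries_conv_genSeries (i : I) : conv (invGenSeries i) (genSeries i) = oneSeries := by
  funext w
  induction w with
  | nil => simp [conv_nil, genSeries, invGenSeries, oneSeries]
  | cons a w ih =>
    rw [conv_cons]
    by_cases h : a = i
    · subst h
      have : (fun u => invGenSeries a (a :: u)) = -invGenSeries a := by
        funext u
        exact invGenSeries_cons_self a u
      rw [this, conv_neg_left, Pi.neg_apply, ih]
      cases w <;> simp [genSeries, invGenSeries, oneSeries]
    · have : (fun u => invGenSeries i (a :: u)) = 0 := by
        funext u
        simp [invGenSeries, List.replicate_succ, h]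
      rw [this, conv_zero_left]
      simp [genSeries, invGenSeries, oneSeries, h]

def magnusUnit (i : I) : (NCSeries I)ˣ where
  val := genSeries i
  inv := invGenSeries i
  val_inv := genSeries_conv_invGenSeries i
  inv_val := invGenSeries_conv_genSeries i

def magnusHom : FreeGroup I →* NCSeries I :=
  (Units.coeHom _).comp (FreeGroup.lift magnusUnit)

lemma magnus_eq_magnusHom (a : FreeGroup I) : magnus a = magnusHom a := by
  have hletter :
      (Units.val ∘ fun p : I × Bool => cond p.2 (magnusUnit p.1) (magnusUnit p.1)⁻¹) =
        letterSeries := by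
    funext ⟨i, b⟩
    cases b <;> rfl
  conv_rhs => rw [← FreeGroup.mk_toWord (x := a)]
  rw [magnusHom, MonoidHom.comp_apply, FreeGroup.lift_mk, map_list_prod,
    List.map_map, Units.coeHom, MonoidHom.coe_mk, OneHom.coe_mk, hletter]
  rfl

lemma magnus_mul (a b : FreeGroup I) : magnus (a * b) = conv (magnus a) (magnus b) := by
  simp only [magnus_eq_magnusHom, map_mul]
  rfl

lemma magnus_one : magnus (1 : FreeGroup I) = oneSeries := by
  rw [magnus_eq_magnusHom, map_one]
  rfl

lemma magnus_of (i : I) : magnus (FreeGroup.of i) = genSeries i := by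
  rw [magnus_eq_magnusHom, magnusHom, MonoidHom.comp_apply, FreeGroup.lift_apply_of]
  rfl

lemma magnus_of_inv (i : I) : magnus (FreeGroup.of i)⁻¹ = invGenSeries i := by
  rw [magnus_eq_magnusHom, magnusHom, MonoidHom.comp_apply, map_inv, FreeGroup.lift_apply_of]
  rfl

lemma magnus_apply_nil (a : FreeGroup I) : magnus a [] = 1 := by
  have : NCSeries.constCoeff.comp magnusHom = (1 : FreeGroup I →* ℤ) :=
    FreeGroup.ext_hom _ _ fun _ => rfl
  rw [magnus_eq_magnusHom]
  exact DFunLike.congr_fun this a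

def wordSeries (L : List (I × Bool)) : List I → ℤ :=
  (L.map letterSeries).foldr conv oneSeries

lemma wordSeries_cons (p : I × Bool) (L : List (I × Bool)) :
    wordSeries (p :: L) = conv (letterSeries p) (wordSeries L) := rfl

lemma letterSeries_self_mul_self (p : I × Bool) :
    letterSeries p [p.1] * letterSeries p [p.1] = 1 := by
  rcases p with ⟨i, _ | _⟩ <;> simp [letterSeries, genSeries, invGenSeries]

lemma conv_letterSeries_of_head_ne (p : I × Bool) (g : List I → ℤ) {w : List I}
    (hw : w.head? ≠ some p.1) : conv (letterSeries p) g w = g w := by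
  cases w with
  | nil => simp [conv_nil, letterSeries_nil]
  | cons a v =>
    have ha : a ≠ p.1 := fun h => hw (by rw [h, List.head?_cons])
    have : (fun u => letterSeries p (a :: u)) = 0 := funext (letterSeries_cons_of_ne ha)
    rw [conv_cons, this, conv_zero_left, letterSeries_nil]
    simp

lemma conv_letterSeries_cons_self (p : I × Bool) (g : List I → ℤ) {v : List I}
    (hv : v.head? ≠ some p.1) :
    conv (letterSeries p) g (p.1 :: v) = g (p.1 :: v) + letterSeries p [p.1] * g v := by
  rw [conv_cons, letterSeries_nil, one_mul]
  congr 1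
  rcases p with ⟨i, _ | _⟩
  · have : (fun u => letterSeries (i, false) (i :: u)) = -letterSeries (i, false) :=
      funext (invGenSeries_cons_self i)
    rw [this, conv_neg_left, Pi.neg_apply, conv_letterSeries_of_head_ne _ _ hv]
    simp [letterSeries, invGenSeries]
  · rw [show letterSeries (i, true) = genSeries i from rfl, genSeries_cons_self, conv_one_left]
    simp [genSeries]

lemma sublist_of_wordSeries_ne_zero {L : List (I × Bool)} {w : List I}
    (hw : w.IsChain (· ≠ ·)) (h : wordSeries L w ≠ 0) : w.Sublist (L.map Prod.fst) := by
  induction L generalizing w with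
  | nil =>
    cases w with
    | nil => exact List.Sublist.slnil
    | cons a w => exact absurd rfl h
  | cons p L ih =>
    rw [wordSeries_cons] at h
    by_cases hhead : w.head? = some p.1
    · obtain ⟨v, rfl⟩ : ∃ v, w = p.1 :: v := ⟨w.tail, by cases w <;> simp_all⟩
      have hv : v.head? ≠ some p.1 := fun h' => hw.rel_head? h' rfl
      rw [conv_letterSeries_cons_self p _ hv] at h
      by_cases h₁ : wordSeries L (p.1 :: v) = 0
      · rw [h₁, zero_add] at h
        exact (ih hw.tail (right_ne_zero_of_mul h)).cons_cons p.1
      · exact (ih hw h₁).cons p.1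
    · rw [conv_letterSeries_of_head_ne p _ hhead] at h
      exact (ih hw h).cons p.1

def runWord (L : List (I × Bool)) : List I := (L.map Prod.fst).destutter (· ≠ ·)

lemma runWord_isChain (L : List (I × Bool)) : (runWord L).IsChain (· ≠ ·) :=
  List.isChain_destutter _ _

lemma runWord_cons_cons_of_eq {p q : I × Bool} (h : p.1 = q.1) (L : List (I × Bool)) :
    runWord (p :: q :: L) = runWord (q :: L) := by
  simp [runWord, h, List.destutter_cons']

lemma runWord_cons_cons_of_ne {p q : I × Bool} (h : p.1 ≠ q.1) (L : List (I × Bool)) :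
    runWord (p :: q :: L) = p.1 :: runWord (q :: L) := by
  simp [runWord, h, List.destutter_cons']

lemma runWord_cons (p : I × Bool) (L : List (I × Bool)) :
    runWord (p :: L) = p.1 :: (runWord (p :: L)).tail := by
  induction L generalizing p with
  | nil => rfl
  | cons q L ih =>
    by_cases h : p.1 = q.1
    · rw [runWord_cons_cons_of_eq h, h]
      exact ih q
    · rw [runWord_cons_cons_of_ne h, List.tail_cons]

lemma wordSeries_eq_zero_of_length_lt {L : List (I × Bool)} {w : List I}
    (hw : w.IsChain (· ≠ ·)) (hlen : (runWord L).length < w.length) : wordSeries L w = 0 := by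
  by_contra h
  exact hlen.not_ge (hw.length_le_length_destutter_ne (sublist_of_wordSeries_ne_zero hw h))

lemma letterSeries_mul_conv_pos_of_pos (p : I × Bool) (g : List I → ℤ) {v : List I}
    (hv : v.head? ≠ some p.1) (h : 0 < letterSeries p [p.1] * g (p.1 :: v) * g v) :
    0 < letterSeries p [p.1] * conv (letterSeries p) g (p.1 :: v) *
      conv (letterSeries p) g v := by
  rw [conv_letterSeries_cons_self p g hv, conv_letterSeries_of_head_ne p g hv]
  calc 0 < letterSeries p [p.1] * g (p.1 :: v) * g v + g v * g v := by
        nlinarith [mul_self_nonneg (g v)]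
    _ = _ := by linear_combination (g v * g v) * (letterSeries_self_mul_self p).symm

lemma letterSeries_mul_conv_pos_of_eq_zero (p : I × Bool) (g : List I → ℤ) {v : List I}
    (hv : v.head? ≠ some p.1) (hz : g (p.1 :: v) = 0) (h : g v ≠ 0) :
    0 < letterSeries p [p.1] * conv (letterSeries p) g (p.1 :: v) *
      conv (letterSeries p) g v := by
  rw [conv_letterSeries_cons_self p g hv, conv_letterSeries_of_head_ne p g hv, hz, zero_add]
  calc 0 < g v * g v := mul_self_pos.2 h
    _ = _ := by linear_combination (g v * g v) * (letterSeries_self_mul_self p).symm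

-- The coefficient at the run word is `±n` times the one at its tail, where `x_{p.1}^{±n}` is the
-- first syllable; so both are nonzero and their signs differ by the sign of the letter `p`.
lemma wordSeries_runWord_pos (p : I × Bool) (L : List (I × Bool))
    (hL : FreeGroup.IsReduced (p :: L)) :
    0 < letterSeries p [p.1] * wordSeries (p :: L) (runWord (p :: L)) *
      wordSeries (p :: L) (runWord (p :: L)).tail := by
  induction L generalizing p with
  | nil => exact letterSeries_mul_conv_pos_of_eq_zero p oneSeries (by simp) rfl one_ne_zero
  | cons q L ih =>
    obtain ⟨hsign, hqL⟩ := FreeGroup.isReduced_cons_cons.1 hL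
    by_cases hpq : p.1 = q.1
    · obtain rfl : p = q := Prod.ext hpq (hsign hpq)
      have hrun := runWord_cons p L
      rw [runWord_cons_cons_of_eq rfl, hrun, List.tail_cons, wordSeries_cons]
      have hchain := runWord_isChain (p :: L)
      rw [hrun] at hchain
      specialize ih p hqL
      rw [hrun, List.tail_cons] at ih
      exact letterSeries_mul_conv_pos_of_pos p _ (fun h => hchain.rel_head? h rfl) ih
    · have hchain := runWord_isChain (p :: q :: L)
      rw [runWord_cons_cons_of_ne hpq] at hchain ⊢
      rw [List.tail_cons, wordSeries_cons]
      refine letterSeries_mul_conv_pos_of_eq_zero p _ (fun h => hchain.rel_head? h rfl)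
        (wordSeries_eq_zero_of_length_lt hchain (by simp)) ?_
      exact right_ne_zero_of_mul (left_ne_zero_of_mul (ih q hqL).ne')

lemma wordSeries_ne_oneSeries {L : List (I × Bool)} (hL : FreeGroup.IsReduced L)
    (hne : L ≠ []) : wordSeries L ≠ oneSeries := by
  obtain ⟨p, L, rfl⟩ := List.exists_cons_of_ne_nil hne
  intro h
  have hpos := wordSeries_runWord_pos p L hL
  rw [h, runWord_cons] at hpos
  simp [oneSeries] at hpos

lemma magnusHom_injective : Function.Injective (magnusHom (I := I)) :=
  (injective_iff_map_eq_one _).2 fun a ha => by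
    by_contra hne
    rw [← magnus_eq_magnusHom] at ha
    exact wordSeries_ne_oneSeries FreeGroup.isReduced_toWord
      (mt FreeGroup.toWord_eq_nil_iff.1 hne) ha

end

theorem magnus_expansion_injective_hom {I : Type*} [DecidableEq I] :
    Function.Injective (magnus (I := I)) ∧
    magnus (1 : FreeGroup I) = oneSeries ∧
    (∀ a b : FreeGroup I, magnus (a * b) = conv (magnus a) (magnus b)) ∧
    (∀ i : I, magnus (FreeGroup.of i) = genSeries i) ∧
    (∀ i : I, magnus (FreeGroup.of i)⁻¹ = invGenSeries i) ∧
    (∀ a : FreeGroup I, magnus a [] = 1) := by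
  refine ⟨fun a b h => magnusHom_injective ?_, magnus_one, magnus_mul, magnus_of, magnus_of_inv,
    magnus_apply_nil⟩
  rwa [← magnus_eq_magnusHom, ← magnus_eq_magnusHom]
end
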